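/- arXiv:2410.23009 — 5 statements merged into one kernel-verified Lean document; each statement's English description precedes it below -/
import Mathlib

section
/- Let d ≥ 2 and let A_d be the d×d matrix over ℚ with entries A_d(1,1)=1, A_d(i,i+1)=1 for 1 ≤ i ≤ d-1, A_d(d,j) = -1 for 2 ≤ j ≤ d, and all other entries 0. Then the characteristic polynomial of A_d is t^d - 1. -/
open Polynomial

/-- auxiliary matrix family -/
noncomputable def Bmat (n : ℕ) : Matrix (Fin n) (Fin n) ℚ[X] :=
  Matrix.of fun i j =>
    if (i : ℕ) = (j : ℕ) then (if (i : ℕ) = n - 1 then X + 1 else X)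
    else if (j : ℕ) = (i : ℕ) + 1 then -1
    else if (i : ℕ) = n - 1 then 1
    else 0

lemma detB : ∀ n : ℕ, (Bmat (n + 1)).det = ∑ k ∈ Finset.range (n + 2), X ^ k := by
  intro n
  induction n with
  | zero =>
    simp [Bmat, Matrix.det_fin_one, Finset.sum_range_succ]
    ring
  | succ n ih =>
    show (Bmat (n + 2)).det = ∑ k ∈ Finset.range (n + 3), X ^ k
    rw [Matrix.det_succ_column_zero]
    have h01 : (0 : Fin (n + 2)) ≠ Fin.last (n + 1) := by
      simp [Fin.ext_iff]
    refine Eq.trans (Finset.sum_subset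
        (Finset.subset_univ ({0, Fin.last (n + 1)} : Finset (Fin (n + 2)))) ?_).symm ?_
    · intro x _ hx
      simp only [Finset.mem_insert, Finset.mem_singleton, not_or] at hx
      have hx0 : (x : ℕ) ≠ 0 := fun h => hx.1 (Fin.ext h)
      have hxl : (x : ℕ) ≠ n + 1 := fun h => hx.2 (by ext; simpa using h)
      have hB : Bmat (n + 2) x 0 = 0 := by
        have h0 : ((0 : Fin (n + 2)) : ℕ) = 0 := rfl
        simp only [Bmat, Matrix.of_apply, h0]
        split_ifs <;> first | rfl | omega | (exfalso; omega) | contradiction | simp_all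
      rw [hB]; ring
    · rw [Finset.sum_pair h01]
      -- first minor equals Bmat (n+1)
      have hsub1 : (Bmat (n + 2)).submatrix (Fin.succAbove 0) Fin.succ = Bmat (n + 1) := by
        ext i j
        simp only [Matrix.submatrix_apply, Fin.zero_succAbove, Bmat, Matrix.of_apply,
          Fin.val_succ]
        split_ifs <;> first | rfl | omega | (exfalso; omega) | contradiction | simp_all
      -- last minor is lower triangular with diagonal -1
      have hsub2 : ((Bmat (n + 2)).submatrix (Fin.succAbove (Fin.last (n + 1))) Fin.succ).det
          = (-1) ^ (n + 1) := by
        rw [Matrix.det_of_lowerTriangular]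
        · rw [show ((-1 : ℚ[X]) ^ (n + 1)) = ∏ _i : Fin (n + 1), (-1 : ℚ[X]) by
            simp [Finset.prod_const]]
          apply Finset.prod_congr rfl
          intro i _
          simp only [Matrix.submatrix_apply, Fin.succAbove_last, Bmat, Matrix.of_apply,
            Fin.val_succ, Fin.coe_castSucc]
          split_ifs <;> first | rfl | omega | (exfalso; omega) | contradiction | simp_all
        · intro i j hij
          have hij' : (i : ℕ) < (j : ℕ) := hij
          simp only [Matrix.submatrix_apply, Fin.succAbove_last, Bmat, Matrix.of_apply,
            Fin.val_succ, Fin.coe_castSucc]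
          split_ifs <;> first | rfl | omega | (exfalso; omega) | contradiction | simp_all
      have hB0 : Bmat (n + 2) 0 0 = X := by
        simp only [Bmat, Matrix.of_apply, Fin.val_zero]
        split_ifs <;> first | rfl | omega | (exfalso; omega) | contradiction | simp_all
      have hBl : Bmat (n + 2) (Fin.last (n + 1)) 0 = 1 := by
        have h0 : ((0 : Fin (n + 2)) : ℕ) = 0 := rfl
        have hl : ((Fin.last (n + 1)) : ℕ) = n + 1 := rfl
        simp only [Bmat, Matrix.of_apply, h0, hl]
        split_ifs <;> first | rfl | omega | (exfalso; omega) | contradiction | simp_all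
      rw [hsub1, hsub2, hB0, hBl, ih]
      simp only [Fin.val_zero, Fin.val_last, pow_zero]
      have hpow : ((-1 : ℚ[X]) ^ (n + 1)) * 1 * (-1) ^ (n + 1) = 1 := by
        rw [mul_one, ← pow_add]
        exact Even.neg_one_pow ⟨n + 1, by ring⟩
      rw [hpow, Finset.sum_range_succ' (fun k => X ^ k) (n + 2), Finset.mul_sum]
      simp [pow_succ, mul_comm]

/-- The RSK matrix for the weight pair ((d-1,1), 1^d), zero-indexed:
entry (0,0) is 1, superdiagonal entries (i, i+1) are 1, last-row entries
(d-1, j) for j ≥ 1 are -1, and all other entries are 0. -/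
theorem stmt0 (d : ℕ) (hd : 2 ≤ d)
    (A : Matrix (Fin d) (Fin d) ℚ)
    (hA : ∀ i j : Fin d,
      A i j = if (i : ℕ) = 0 ∧ (j : ℕ) = 0 then 1
        else if (i : ℕ) + 1 = (j : ℕ) then 1
        else if (i : ℕ) = d - 1 ∧ 1 ≤ (j : ℕ) then -1
        else 0) :
    Matrix.charpoly A = X ^ d - 1 := by
  obtain ⟨m, rfl⟩ : ∃ m, d = m + 2 := ⟨d - 2, by omega⟩
  rw [Matrix.charpoly, Matrix.det_succ_column_zero]
  refine Eq.trans (Finset.sum_subset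
      (Finset.subset_univ ({0} : Finset (Fin (m + 2)))) ?_).symm ?_
  · intro x _ hx
    simp only [Finset.mem_singleton] at hx
    have hx0 : (x : ℕ) ≠ 0 := fun h => hx (Fin.ext h)
    have hcol : Matrix.charmatrix A x 0 = 0 := by
      rw [Matrix.charmatrix_apply_ne _ _ _ hx, hA]
      have h0 : ((0 : Fin (m + 2)) : ℕ) = 0 := rfl
      simp only [h0]
      split_ifs <;> first | rfl | omega | (exfalso; omega) | contradiction | simp | simp_all
    rw [hcol]; ring
  · rw [Finset.sum_singleton]
    have h00 : Matrix.charmatrix A 0 0 = X - 1 := by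
      rw [Matrix.charmatrix_apply_eq, hA]
      norm_num
    have hsub : (Matrix.charmatrix A).submatrix (Fin.succAbove 0) Fin.succ = Bmat (m + 1) := by
      ext i j
      simp only [Matrix.submatrix_apply, Fin.zero_succAbove]
      by_cases hij : i.succ = j.succ
      · have hij' : (i : ℕ) = (j : ℕ) := by
          have := Fin.succ_injective _ hij
          exact congrArg Fin.val this
        rw [hij, Matrix.charmatrix_apply_eq, hA]
        simp only [Bmat, Matrix.of_apply, Fin.val_succ]
        split_ifs <;> first | rfl | omega | (exfalso; omega) | contradiction | simp | simp_all
      · have hij' : (i : ℕ) ≠ (j : ℕ) := by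
          intro h; exact hij (by ext; simpa using h)
        rw [Matrix.charmatrix_apply_ne _ _ _ hij, hA]
        simp only [Bmat, Matrix.of_apply, Fin.val_succ]
        split_ifs <;> first | rfl | omega | (exfalso; omega) | contradiction | simp | simp_all
    rw [h00, hsub, detB]
    simp only [Fin.val_zero, pow_zero, one_mul]
    rw [mul_comm, geom_sum_mul]
end

section
/- Let d ≥ 2 and let A_d be the d×d matrix with entries A_d(1,1)=1, A_d(i,i+1)=1 for 1 ≤ i ≤ d-1, A_d(d,j) = -1 for 2 ≤ j ≤ d, and all other entries 0. Then every d-th root of unity in ℂ is an eigenvalue of A_d (viewed as a complex matrix). -/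
/-- Every d-th root of unity is an eigenvalue of the RSK matrix for the
voting weight pair ((d-1,1), 1^d), viewed as a complex matrix. -/
theorem stmt1 (d : ℕ) (hd : 2 ≤ d)
    (A : Matrix (Fin d) (Fin d) ℂ)
    (hA : ∀ i j : Fin d,
      A i j = if (i : ℕ) = 0 ∧ (j : ℕ) = 0 then 1
        else if (i : ℕ) + 1 = (j : ℕ) then 1
        else if (i : ℕ) = d - 1 ∧ 1 ≤ (j : ℕ) then -1
        else 0)
    (z : ℂ) (hz : z ^ d = 1) :
    z ∈ spectrum ℂ A := by
  classical
  -- the candidate eigenvector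
  set g : ℕ → ℂ := fun n => if n = 0 then 1 else z ^ (n - 1) * (z - 1) with hg
  set v : Fin d → ℂ := fun j => g (j : ℕ) with hv
  have hv0 : v ⟨0, by omega⟩ = 1 := by simp [hv, hg]
  have hvne : v ≠ 0 := by
    intro h
    have := congrFun h ⟨0, by omega⟩
    rw [hv0] at this
    simp at this
  -- the key computation: A *ᵥ v = z • v
  have key : ∀ i : Fin d, ∑ j : Fin d, A i j * v j = z * v i := by
    intro i
    have hsum : ∑ j : Fin d, A i j * v j
        = ∑ n ∈ Finset.range d,
            ((if (i : ℕ) = 0 ∧ n = 0 then 1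
              else if (i : ℕ) + 1 = n then 1
              else if (i : ℕ) = d - 1 ∧ 1 ≤ n then (-1 : ℂ)
              else 0) * g n) := by
      rw [← Fin.sum_univ_eq_sum_range]
      apply Finset.sum_congr rfl
      intro j _
      rw [hA i j]
    rw [hsum]
    rcases Nat.lt_trichotomy (i : ℕ) (d - 1) with hi | hi | hi
    · rcases Nat.eq_zero_or_pos (i : ℕ) with h0 | h0
      · -- i = 0 : row is g 0 + g 1 = 1 + (z - 1) = z
        have hne : (0 : ℕ) ≠ d - 1 := by omega
        have hcg : ∀ n ∈ Finset.range d,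
            ((if (i : ℕ) = 0 ∧ n = 0 then 1
              else if (i : ℕ) + 1 = n then 1
              else if (i : ℕ) = d - 1 ∧ 1 ≤ n then (-1 : ℂ)
              else 0) * g n)
            = (if n = 0 then g 0 else 0) + (if n = 1 then g 1 else 0) := by
          intro n _
          rcases n with _ | _ | n
          · rw [if_pos ⟨h0, rfl⟩, if_pos rfl, if_neg (by omega), one_mul, add_zero]
          · rw [if_neg (by omega), if_pos (by omega), if_neg (by omega), if_pos rfl,
              one_mul]
            exact (zero_add _).symm
          · rw [if_neg (by omega), if_neg (by omega),
              if_neg (by omega : ¬((i : ℕ) = d - 1 ∧ 1 ≤ n + 1 + 1)),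
              if_neg (by omega), if_neg (by omega), zero_mul, add_zero]
        rw [Finset.sum_congr rfl hcg, Finset.sum_add_distrib,
          Finset.sum_ite_eq' (Finset.range d) 0, Finset.sum_ite_eq' (Finset.range d) 1]
        rw [if_pos (Finset.mem_range.mpr (by omega)), if_pos (Finset.mem_range.mpr (by omega))]
        have e0 : g 0 = 1 := by simp [hg]
        have e1 : g 1 = z - 1 := by simp [hg]
        have hvi : v i = 1 := by simp [hv, hg, h0]
        rw [e0, e1, hvi]; ring
      · -- middle rows: g (i+1) = z * (g i)
        have hcg : ∀ n ∈ Finset.range d,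
            ((if (i : ℕ) = 0 ∧ n = 0 then 1
              else if (i : ℕ) + 1 = n then 1
              else if (i : ℕ) = d - 1 ∧ 1 ≤ n then (-1 : ℂ)
              else 0) * g n)
            = (if n = (i : ℕ) + 1 then g ((i : ℕ) + 1) else 0) := by
          intro n _
          by_cases hn : n = (i : ℕ) + 1
          · subst hn
            rw [if_neg (by omega), if_pos rfl, if_pos rfl, one_mul]
          · rw [if_neg (by omega), if_neg (fun h => hn h.symm),
              if_neg (by omega : ¬((i : ℕ) = d - 1 ∧ 1 ≤ n)), if_neg hn, zero_mul]
        rw [Finset.sum_congr rfl hcg, Finset.sum_ite_eq' (Finset.range d)]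
        rw [if_pos (Finset.mem_range.mpr (by omega))]
        have hi0 : (i : ℕ) ≠ 0 := by omega
        have e2 : g ((i : ℕ) + 1) = z ^ (i : ℕ) * (z - 1) := by simp [hg]
        have hvi : v i = z ^ ((i : ℕ) - 1) * (z - 1) := by simp [hv, hg, hi0]
        have e3 : z ^ (i : ℕ) = z * z ^ ((i : ℕ) - 1) := by
          rw [← pow_succ']
          congr 1
          omega
        rw [e2, hvi, e3]; ring
    · -- last row
      have hine : (i : ℕ) ≠ 0 := by omega
      have hcg : ∀ n ∈ Finset.range d,
          ((if (i : ℕ) = 0 ∧ n = 0 then 1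
            else if (i : ℕ) + 1 = n then 1
            else if (i : ℕ) = d - 1 ∧ 1 ≤ n then (-1 : ℂ)
            else 0) * g n)
          = -(if n = 0 then 0 else g n) := by
        intro n hn
        have hn' := Finset.mem_range.mp hn
        have h1 : ¬((i : ℕ) = 0 ∧ n = 0) := by omega
        have h2 : (i : ℕ) + 1 ≠ n := by omega
        rcases Nat.eq_zero_or_pos n with h | h
        · rw [if_neg h1, if_neg h2, if_neg (by omega : ¬((i : ℕ) = d - 1 ∧ 1 ≤ n)),
            if_pos h, zero_mul, neg_zero]
        · rw [if_neg h1, if_neg h2, if_pos ⟨hi, h⟩, if_neg (by omega : ¬ n = 0)]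
          ring
      rw [Finset.sum_congr rfl hcg, Finset.sum_neg_distrib]
      have hd1 : d = (d - 1) + 1 := by omega
      rw [hd1, Finset.sum_range_succ']
      rw [if_pos rfl, add_zero]
      have hrw : ∀ k ∈ Finset.range (d - 1),
          (if k + 1 = 0 then (0:ℂ) else g (k + 1)) = z ^ k * (z - 1) := by
        intro k _; simp [hg]
      rw [Finset.sum_congr rfl hrw, ← Finset.sum_mul, geom_sum_mul]
      have hvi : v i = z ^ ((i : ℕ) - 1) * (z - 1) := by simp [hv, hg, hine]
      rw [hvi, hi]
      have h1 : z * (z ^ (d - 1 - 1) * (z - 1)) = z ^ (d - 1) * (z - 1) := by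
        rw [← mul_assoc, ← pow_succ']
        congr 2
        omega
      rw [h1]
      have h2 : z ^ (d - 1) * z = 1 := by
        rw [← pow_succ, ← hd1, hz]
      linear_combination -h2
    · exact absurd i.isLt (by omega)
  -- conclude: det (z • 1 - A) = 0, so z • 1 - A is not a unit
  have hmul : (z • (1 : Matrix (Fin d) (Fin d) ℂ) - A).mulVec v = 0 := by
    funext i
    simp only [Matrix.sub_mulVec, Matrix.smul_mulVec, Matrix.one_mulVec,
      Pi.sub_apply, Pi.smul_apply, Pi.zero_apply, smul_eq_mul]
    rw [Matrix.mulVec, dotProduct, key i]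
    ring
  have hdet : (z • (1 : Matrix (Fin d) (Fin d) ℂ) - A).det = 0 := by
    rw [← Matrix.exists_mulVec_eq_zero_iff]
    exact ⟨v, hvne, hmul⟩
  rw [spectrum.mem_iff]
  intro hU
  rw [Algebra.algebraMap_eq_smul_one, Matrix.isUnit_iff_isUnit_det, hdet] at hU
  exact (not_isUnit_zero : ¬ IsUnit (0 : ℂ)) hU
end

section
/- Fix n ≥ 1 and π ∈ ℕ^n with π_1 ≥ 1. Let Comp(π) be the set of tuples τ ∈ ℕ^n with τ_j ≤ π_j for all j and Σ_j τ_j = π_1. Define the square matrix M_π indexed by Comp(π) with entries M_π(ρ,τ) = (-1)^{π_1 - ρ_1} · Π_{j=2}^n C(τ_j, ρ_j). Then M_π² is the identity matrix. -/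
/-!
Since `π₁ - τ₁ = ∑_{j ≥ 2} τ_j`, the `(ρ, σ)` entry of `M_π²` is
`∑_τ ∏_{j ≥ 2} (-1)^(ρ_j + τ_j) C(τ_j, ρ_j) C(σ_j, τ_j)`. A composition is determined by its tail
`(τ_j)_{j ≥ 2}`, and the tails are exactly the bounded tuples of sum `≤ π₁`. Only `τ_j ≤ σ_j`
contribute and `∑_{j ≥ 2} σ_j ≤ π₁`, so the sum runs over the full box and factors as
`∏_{j ≥ 2} ∑_t (-1)^(ρ_j + t) C(t, ρ_j) C(σ_j, t) = ∏_{j ≥ 2} δ(ρ_j, σ_j)` (binomial inversion),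
which is `δ(ρ, σ)`. Below, the distinguished first index is an arbitrary `i₀`.
-/

open Finset

theorem sum_range_neg_one_pow_mul_choose {R : Type*} [CommRing R] (m : ℕ) :
    ∑ u ∈ range (m + 1), (-1 : R) ^ u * m.choose u = if m = 0 then 1 else 0 := by
  simpa [zero_pow_eq] using (add_pow (-1 : R) 1 m).symm

theorem sum_range_neg_one_pow_mul_choose_mul_choose {R : Type*} [CommRing R] {r s N : ℕ}
    (hs : s ≤ N) :
    ∑ t ∈ range (N + 1), (-1 : R) ^ (r + t) * t.choose r * s.choose t =
      if r = s then 1 else 0 := by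
  rw [← sum_subset (range_subset_range.mpr (Nat.add_le_add_right hs 1)) fun t _ ht => by
    simp [Nat.choose_eq_zero_of_lt (not_lt.mp (mt mem_range.mpr ht))]]
  obtain hsr | hrs := lt_or_ge s r
  · rw [if_neg hsr.ne']
    exact sum_eq_zero fun t ht => by
      simp [Nat.choose_eq_zero_of_lt ((mem_range.mp ht).trans_le hsr)]
  obtain ⟨m, rfl⟩ := Nat.exists_eq_add_of_le hrs
  have hshift : ∀ u, (-1 : R) ^ (r + (r + u)) * (r + u).choose r * (r + m).choose (r + u) =
      (r + m).choose r * ((-1) ^ u * m.choose u) := by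
    intro u
    have hc : ((r + m).choose (r + u) : R) * (r + u).choose r =
        (r + m).choose r * m.choose u := by
      have := Nat.choose_mul (n := r + m) (Nat.le_add_right r u)
      simp only [Nat.add_sub_cancel_left] at this
      simpa only [Nat.cast_mul] using congrArg (Nat.cast : ℕ → R) this
    rw [← add_assoc, pow_add, (Even.add_self r).neg_one_pow, one_mul]
    linear_combination (-1 : R) ^ u * hc
  rw [add_assoc, sum_range_add, sum_eq_zero fun t ht => by
      simp [Nat.choose_eq_zero_of_lt (mem_range.mp ht)], zero_add]
  simp only [hshift, ← mul_sum, sum_range_neg_one_pow_mul_choose]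
  rcases eq_or_ne m 0 with rfl | hm
  · simp
  · simp [hm]

def subtypeFinAddEqEquiv {β : Type*} (N : ℕ) (S : β → ℕ) :
    {p : Fin (N + 1) × β // (p.1 : ℕ) + S p.2 = N} ≃ {b // S b ≤ N} where
  toFun p := ⟨p.1.2, by have := p.2; omega⟩
  invFun b := ⟨(⟨N - S b, by omega⟩, b), Nat.sub_add_cancel b.2⟩
  left_inv p := Subtype.ext (Prod.ext (Fin.ext (Nat.sub_eq_of_eq_add p.2.symm)) rfl)
  right_inv _ := rfl

section BoundedComposition

variable {ι : Type*} [Fintype ι] [DecidableEq ι] (i₀ : ι) (π : ι → ℕ)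

abbrev BoundedComposition : Type _ :=
  {τ : (j : ι) → Fin (π j + 1) // ∑ j, (τ j : ℕ) = π i₀}

@[to_additive]
theorem prod_univ_erase_eq_prod_subtype_ne {M : Type*} [CommMonoid M] (f : ι → M) :
    ∏ j ∈ univ.erase i₀, f j = ∏ j : {j // j ≠ i₀}, f j :=
  prod_subtype _ (by simp) f

def boundedCompositionEquiv : BoundedComposition i₀ π ≃
    {f : (j : {j // j ≠ i₀}) → Fin (π j + 1) // ∑ j, (f j : ℕ) ≤ π i₀} :=
  ((Equiv.piSplitAt i₀ fun j => Fin (π j + 1)).subtypeEquiv fun τ => by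
    rw [← add_sum_erase _ _ (mem_univ i₀), sum_univ_erase_eq_sum_subtype_ne]
    rfl).trans (subtypeFinAddEqEquiv _ _)

variable {i₀ π}

theorem BoundedComposition.sum_erase (τ : BoundedComposition i₀ π) :
    ∑ j ∈ univ.erase i₀, (τ.1 j : ℕ) = π i₀ - τ.1 i₀ := by
  have := add_sum_erase _ (fun j => (τ.1 j : ℕ)) (mem_univ i₀)
  have := τ.2
  omega

theorem BoundedComposition.eq_iff_forall_mem_erase {ρ σ : BoundedComposition i₀ π} :
    ρ = σ ↔ ∀ j ∈ univ.erase i₀, (ρ.1 j : ℕ) = σ.1 j :=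
  ⟨by rintro rfl _ _; rfl, fun h => (boundedCompositionEquiv i₀ π).injective <|
    Subtype.ext <| funext fun j => Fin.ext <| h j (by simp [j.2])⟩

theorem sum_boundedComposition_prod_eq_prod_sum {R : Type*} [CommSemiring R]
    (g : ι → ℕ → R) (b : ι → ℕ) (hg : ∀ j t, b j < t → g j t = 0)
    (hb : ∑ j ∈ univ.erase i₀, b j ≤ π i₀) :
    ∑ τ : BoundedComposition i₀ π, ∏ j ∈ univ.erase i₀, g j (τ.1 j) =
      ∏ j ∈ univ.erase i₀, ∑ t ∈ range (π j + 1), g j t := by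
  let G : ((j : {j // j ≠ i₀}) → Fin (π j + 1)) → R := fun f => ∏ j, g j.1 (f j)
  have hG : ∀ f, G f ≠ 0 → ∑ j, (f j : ℕ) ≤ π i₀ := fun f hf =>
    calc ∑ j, (f j : ℕ) ≤ ∑ j : {j // j ≠ i₀}, b j :=
          sum_le_sum fun j _ => not_lt.mp fun h => hf (prod_eq_zero (mem_univ j) (hg _ _ h))
      _ = ∑ j ∈ univ.erase i₀, b j := (sum_univ_erase_eq_sum_subtype_ne i₀ b).symm
      _ ≤ π i₀ := hb
  calc ∑ τ : BoundedComposition i₀ π, ∏ j ∈ univ.erase i₀, g j (τ.1 j)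
      = ∑ τ : BoundedComposition i₀ π, G (boundedCompositionEquiv i₀ π τ).1 := by
        simp only [prod_univ_erase_eq_prod_subtype_ne i₀]; rfl
    _ = ∑ f : {f // ∑ j, (f j : ℕ) ≤ π i₀}, G f.1 :=
        (boundedCompositionEquiv i₀ π).sum_comp fun f => G f.1
    _ = ∑ f, G f := by
        rw [← sum_subtype (univ.filter fun f => ∑ j, (f j : ℕ) ≤ π i₀) (by simp) G,
          sum_filter_of_ne fun f _ => hG f]
    _ = ∏ j : {j // j ≠ i₀}, ∑ t : Fin (π j + 1), g j t :=
        (Fintype.prod_sum fun (j : {j // j ≠ i₀}) (t : Fin (π j + 1)) => g j t).symm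
    _ = ∏ j ∈ univ.erase i₀, ∑ t ∈ range (π j + 1), g j t := by
        simp only [prod_univ_erase_eq_prod_subtype_ne i₀, Fin.sum_univ_eq_sum_range (g _)]

variable (i₀ π) (R : Type*) [CommRing R]

def rskMatrix : Matrix (BoundedComposition i₀ π) (BoundedComposition i₀ π) R := fun ρ τ =>
  (-1) ^ (π i₀ - ρ.1 i₀) * ∏ j ∈ univ.erase i₀, ((τ.1 j : ℕ).choose (ρ.1 j) : R)

theorem rskMatrix_mul_self : rskMatrix i₀ π R * rskMatrix i₀ π R = 1 := by
  ext ρ σ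
  let g : ι → ℕ → R := fun j t =>
    (-1) ^ ((ρ.1 j : ℕ) + t) * (t.choose (ρ.1 j) : R) * ((σ.1 j : ℕ).choose t : R)
  have hterm : ∀ τ, rskMatrix i₀ π R ρ τ * rskMatrix i₀ π R τ σ =
      ∏ j ∈ univ.erase i₀, g j (τ.1 j) := fun τ => by
    rw [rskMatrix, rskMatrix, ← ρ.sum_erase, ← τ.sum_erase, ← prod_pow_eq_pow_sum,
      ← prod_pow_eq_pow_sum, mul_mul_mul_comm, ← prod_mul_distrib, ← prod_mul_distrib,
      ← prod_mul_distrib]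
    exact prod_congr rfl fun j _ => by ring
  rw [Matrix.mul_apply, Matrix.one_apply, Fintype.sum_congr _ _ hterm,
    sum_boundedComposition_prod_eq_prod_sum g (fun j => σ.1 j)
      (fun j t h => by simp [g, Nat.choose_eq_zero_of_lt h])
      (σ.sum_erase.trans_le (Nat.sub_le _ _)),
    prod_congr rfl fun j _ => sum_range_neg_one_pow_mul_choose_mul_choose (Fin.is_le _),
    prod_boole]
  congr 1
  exact propext BoundedComposition.eq_iff_forall_mem_erase.symm

end BoundedComposition

theorem stmt6_general (n : ℕ) (hn : 0 < n) (π : Fin n → ℕ)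
    (M : Matrix {τ : (j : Fin n) → Fin (π j + 1) // ∑ j, ((τ j : ℕ)) = π ⟨0, hn⟩}
                {τ : (j : Fin n) → Fin (π j + 1) // ∑ j, ((τ j : ℕ)) = π ⟨0, hn⟩} ℚ)
    (hM : ∀ ρ τ, M ρ τ =
      (-1) ^ (π ⟨0, hn⟩ - (ρ.val ⟨0, hn⟩ : ℕ)) *
        ∏ j ∈ Finset.univ.erase ⟨0, hn⟩,
          (Nat.choose (τ.val j : ℕ) (ρ.val j : ℕ) : ℚ)) :
    M * M = 1 := by
  obtain rfl : M = rskMatrix ⟨0, hn⟩ π ℚ := Matrix.ext hM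
  exact rskMatrix_mul_self _ π ℚ

/-- The matrix M_π indexed by π-bounded compositions (tuples τ with
τ_j ≤ π_j and Σ τ_j = π_1), with entries
M_π(ρ,τ) = (-1)^{π_1 - ρ_1} · Π_{j≥2} C(τ_j, ρ_j), squares to the identity. -/
theorem stmt6 (n : ℕ) (hn : 0 < n) (π : Fin n → ℕ) (hπ : 1 ≤ π ⟨0, hn⟩)
    (M : Matrix {τ : (j : Fin n) → Fin (π j + 1) // ∑ j, ((τ j : ℕ)) = π ⟨0, hn⟩}
                {τ : (j : Fin n) → Fin (π j + 1) // ∑ j, ((τ j : ℕ)) = π ⟨0, hn⟩} ℚ)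
    (hM : ∀ ρ τ, M ρ τ =
      (-1) ^ (π ⟨0, hn⟩ - (ρ.val ⟨0, hn⟩ : ℕ)) *
        ∏ j ∈ Finset.univ.erase ⟨0, hn⟩,
          (Nat.choose (τ.val j : ℕ) (ρ.val j : ℕ) : ℚ)) :
    M * M = 1 :=
  stmt6_general n hn π M hM
end

section
/- Let σ ∈ ℕ^m, π ∈ ℕ^n with |σ| = |π| = d, and fix k ∈ [m], ℓ ∈ [n]. Then every contingency table α with margins (σ,π) satisfies α_{k,ℓ} > 0 if and only if σ_k + π_ℓ > d. -/
open Finset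

private lemma sum_update_pred {N d : ℕ} (σ : Fin N → ℕ) (i : Fin N)
    (hi : 0 < σ i) (h : ∑ x, σ x = d + 1) :
    ∑ x, Function.update σ i (σ i - 1) x = d := by
  rw [Finset.sum_update_of_mem (mem_univ i)]
  have h2 : σ i + ∑ x ∈ univ.erase i, σ x = ∑ x, σ x :=
    Finset.add_sum_erase _ _ (mem_univ i)
  rw [← Finset.erase_eq]
  omega

private lemma step_table {m n : ℕ} (k : Fin m) (ℓ : Fin n) (i : Fin m) (j : Fin n)
    (σ : Fin m → ℕ) (π : Fin n → ℕ)
    (hij : ¬(i = k ∧ j = ℓ)) (hi : 0 < σ i) (hj : 0 < π j)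
    (h : ∃ β : Fin m → Fin n → ℕ,
        (∀ i', ∑ j', β i' j' = Function.update σ i (σ i - 1) i') ∧
        (∀ j', ∑ i', β i' j' = Function.update π j (π j - 1) j') ∧ β k ℓ = 0) :
    ∃ α : Fin m → Fin n → ℕ,
        (∀ i', ∑ j', α i' j' = σ i') ∧ (∀ j', ∑ i', α i' j' = π j') ∧ α k ℓ = 0 := by
  obtain ⟨β, hrow, hcol, hz⟩ := h
  refine ⟨fun i' j' => β i' j' + if i' = i ∧ j' = j then 1 else 0, ?_, ?_, ?_⟩
  · intro i'
    rw [Finset.sum_add_distrib, hrow]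
    by_cases hii : i' = i
    · subst hii
      simp only [Function.update_self, true_and]
      rw [Finset.sum_ite_eq' univ j (fun _ => 1)]
      simp only [mem_univ, if_true]
      omega
    · rw [Function.update_of_ne hii]
      simp [hii]
  · intro j'
    rw [Finset.sum_add_distrib, hcol]
    by_cases hjj : j' = j
    · subst hjj
      simp only [Function.update_self, and_true]
      rw [Finset.sum_ite_eq' univ i (fun _ => 1)]
      simp only [mem_univ, if_true]
      omega
    · rw [Function.update_of_ne hjj]
      simp [hjj]
  · simp only [hz]
    have : ¬(k = i ∧ ℓ = j) := fun ⟨h1, h2⟩ => hij ⟨h1.symm, h2.symm⟩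
    simp [this]

private lemma exists_table {m n : ℕ} (k : Fin m) (ℓ : Fin n) :
    ∀ (d : ℕ) (σ : Fin m → ℕ) (π : Fin n → ℕ), (∑ i, σ i = d) → (∑ j, π j = d) →
      σ k + π ℓ ≤ d →
      ∃ α : Fin m → Fin n → ℕ,
        (∀ i, ∑ j, α i j = σ i) ∧ (∀ j, ∑ i, α i j = π j) ∧ α k ℓ = 0 := by
  intro d
  induction d with
  | zero =>
    intro σ π hσ hπ _
    refine ⟨fun _ _ => 0, ?_, ?_, rfl⟩
    · intro i
      have := (Finset.sum_eq_zero_iff.mp hσ) i (mem_univ i)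
      simp [this]
    · intro j
      have := (Finset.sum_eq_zero_iff.mp hπ) j (mem_univ j)
      simp [this]
  | succ d ih =>
    intro σ π hσ hπ hle
    -- helper sums over erase
    have hσk : σ k + ∑ x ∈ univ.erase k, σ x = d + 1 := by
      rw [Finset.add_sum_erase _ _ (mem_univ k)]; exact hσ
    have hπℓ : π ℓ + ∑ x ∈ univ.erase ℓ, π x = d + 1 := by
      rw [Finset.add_sum_erase _ _ (mem_univ ℓ)]; exact hπ
    -- choose (i, j)
    have main : ∃ (i : Fin m) (j : Fin n), 0 < σ i ∧ 0 < π j ∧ ¬(i = k ∧ j = ℓ) ∧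
        (σ k - (if i = k then 1 else 0)) + (π ℓ - (if j = ℓ then 1 else 0)) ≤ d := by
      by_cases hπℓ0 : 0 < π ℓ
      · -- take j = ℓ, need i ≠ k with σ i > 0
        have hsum : ∑ x ∈ univ.erase k, σ x ≠ 0 := by omega
        obtain ⟨i, hik, hi⟩ := Finset.exists_ne_zero_of_sum_ne_zero hsum
        have hik' : i ≠ k := Finset.ne_of_mem_erase hik
        exact ⟨i, ℓ, Nat.pos_of_ne_zero hi, hπℓ0,
          fun h => hik' h.1, by simp [hik']; omega⟩
      · by_cases hσk0 : 0 < σ k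
        · -- take i = k, need j ≠ ℓ with π j > 0
          have hsum : ∑ x ∈ univ.erase ℓ, π x ≠ 0 := by omega
          obtain ⟨j, hjl, hj⟩ := Finset.exists_ne_zero_of_sum_ne_zero hsum
          have hjl' : j ≠ ℓ := Finset.ne_of_mem_erase hjl
          exact ⟨k, j, hσk0, Nat.pos_of_ne_zero hj,
            fun h => hjl' h.2, by simp [hjl']; omega⟩
        · -- σ k = 0 and π ℓ = 0; pick any positive i, j
          have hsσ : ∑ i, σ i ≠ 0 := by omega
          have hsπ : ∑ j, π j ≠ 0 := by omega
          obtain ⟨i, _, hi⟩ := Finset.exists_ne_zero_of_sum_ne_zero hsσ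
          obtain ⟨j, _, hj⟩ := Finset.exists_ne_zero_of_sum_ne_zero hsπ
          have hik : i ≠ k := fun h => hi (by rw [h]; omega)
          have hjl : j ≠ ℓ := fun h => hj (by rw [h]; omega)
          exact ⟨i, j, Nat.pos_of_ne_zero hi, Nat.pos_of_ne_zero hj,
            fun h => hik h.1, by simp [hik, hjl]; omega⟩
    obtain ⟨i, j, hi, hj, hij, hineq⟩ := main
    refine step_table k ℓ i j σ π hij hi hj ?_
    refine ih _ _ (sum_update_pred σ i hi hσ) (sum_update_pred π j hj hπ) ?_
    by_cases hik : i = k <;> by_cases hjl : j = ℓ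
    · exact absurd ⟨hik, hjl⟩ hij
    · subst hik
      rw [Function.update_self, Function.update_of_ne (Ne.symm hjl)]
      simp only [if_pos rfl, if_neg hjl] at hineq
      omega
    · subst hjl
      rw [Function.update_of_ne (Ne.symm hik), Function.update_self]
      simp only [if_pos rfl, if_neg hik] at hineq
      omega
    · rw [Function.update_of_ne (Ne.symm hik), Function.update_of_ne (Ne.symm hjl)]
      simp only [if_neg hik, if_neg hjl] at hineq
      omega

/-- Every contingency table with margins (σ,π) has positive (k,ℓ) entry if
and only if σ_k + π_ℓ > d. -/
theorem stmt10 (m n : ℕ) (σ : Fin m → ℕ) (π : Fin n → ℕ) (d : ℕ)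
    (hσ : ∑ i, σ i = d) (hπ : ∑ j, π j = d)
    (k : Fin m) (ℓ : Fin n) :
    (∀ α : Fin m → Fin n → ℕ,
      (∀ i, ∑ j, α i j = σ i) → (∀ j, ∑ i, α i j = π j) → 0 < α k ℓ)
    ↔ d < σ k + π ℓ := by
  constructor
  · intro H
    by_contra hle
    push_neg at hle
    obtain ⟨α, hrow, hcol, hz⟩ := exists_table k ℓ d σ π hσ hπ hle
    have := H α hrow hcol
    omega
  · intro hlt α hrow hcol
    have h1 : π ℓ = α k ℓ + ∑ i ∈ univ.erase k, α i ℓ := by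
      rw [← hcol ℓ]
      exact (Finset.add_sum_erase _ (fun i => α i ℓ) (mem_univ k)).symm
    have h2 : ∑ i ∈ univ.erase k, α i ℓ ≤ ∑ i ∈ univ.erase k, σ i := by
      refine Finset.sum_le_sum fun i _ => ?_
      rw [← hrow i]
      exact Finset.single_le_sum (fun _ _ => Nat.zero_le _) (mem_univ ℓ)
    have h3 : σ k + ∑ i ∈ univ.erase k, σ i = d := by
      rw [Finset.add_sum_erase _ _ (mem_univ k)]; exact hσ
    omega
end

section
/- The polynomial f(t) = t^5 + t^4 − 3t^3 − 2t^2 − t − 1 has exactly three real roots. -/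
/-!
The derivative `5x⁴ + 4x³ - 9x² - 4x - 1` is positive on `(-∞, -1.7]` and on `[1.3, ∞)` and negative
on `[-1.6, 1.2]`, so `f` is injective on each of these three pieces, while on the gaps `[-1.7, -1.6]`
and `[1.2, 1.3]` it has constant sign and no zero. The signs of `f` at `-3, -1.7, -1.6, 1.2, 1.3, 2`
give, by the intermediate value theorem, one root in each piece, hence exactly three roots.
-/

open Set

def quintic (x : ℝ) : ℝ := x ^ 5 + x ^ 4 - 3 * x ^ 3 - 2 * x ^ 2 - x - 1

def quintic' (x : ℝ) : ℝ := 5 * x ^ 4 + 4 * x ^ 3 - 9 * x ^ 2 - 4 * x - 1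

lemma continuous_quintic : Continuous quintic := by
  unfold quintic; fun_prop

lemma hasDerivAt_quintic (x : ℝ) : HasDerivAt quintic (quintic' x) x := by
  have h := ((((((hasDerivAt_id' x).pow 5).add ((hasDerivAt_id' x).pow 4)).sub
    (((hasDerivAt_id' x).pow 3).const_mul 3)).sub (((hasDerivAt_id' x).pow 2).const_mul 2)).sub
    (hasDerivAt_id' x)).sub_const 1
  exact h.congr_deriv (by simp only [quintic']; ring)

lemma quintic'_pos_of_le {x : ℝ} (hx : x ≤ -1.7) : 0 < quintic' x := by
  unfold quintic'
  nlinarith [sq_nonneg (x + 1.7), sq_nonneg (x ^ 2 + 1.7 * x), sq_nonneg x, sq_nonneg (x + 2),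
    sq_nonneg (x ^ 2 - 1)]

lemma quintic'_neg_of_mem_Icc {x : ℝ} (hx : x ∈ Icc (-1.6) 1.2) : quintic' x < 0 := by
  obtain ⟨h1, h2⟩ := hx
  have h := mul_nonneg (sub_nonneg.2 h1) (sub_nonneg.2 h2)
  unfold quintic'
  nlinarith [sq_nonneg (x + 0.2), sq_nonneg x, sq_nonneg (x - 1), sq_nonneg (x + 1),
    mul_nonneg h (sq_nonneg x)]

lemma quintic'_pos_of_ge {x : ℝ} (hx : 1.3 ≤ x) : 0 < quintic' x := by
  unfold quintic'
  nlinarith [sq_nonneg (x - 1.3), sq_nonneg (x ^ 2 - 1.3 * x), sq_nonneg x]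

lemma quintic_pos_of_mem_Icc {x : ℝ} (hx : x ∈ Icc (-1.7) (-1.6)) : 0 < quintic x := by
  obtain ⟨h1, h2⟩ := hx
  have h := mul_nonneg (sub_nonneg.2 h1) (sub_nonneg.2 h2)
  unfold quintic
  nlinarith [sq_nonneg (x + 1.65), mul_nonneg h (sq_nonneg (x + 1.65)), mul_nonneg h (sq_nonneg x)]

lemma quintic_neg_of_mem_Icc {x : ℝ} (hx : x ∈ Icc 1.2 1.3) : quintic x < 0 := by
  obtain ⟨h1, h2⟩ := hx
  have h := mul_nonneg (sub_nonneg.2 h1) (sub_nonneg.2 h2)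
  unfold quintic
  nlinarith [sq_nonneg x, mul_nonneg h (sq_nonneg x)]

lemma strictMonoOn_quintic_Iic : StrictMonoOn quintic (Iic (-1.7)) :=
  strictMonoOn_of_hasDerivWithinAt_pos (convex_Iic _) continuous_quintic.continuousOn
    (fun x _ ↦ (hasDerivAt_quintic x).hasDerivWithinAt)
    (fun _ hx ↦ quintic'_pos_of_le (interior_subset (s := Iic _) hx))

lemma strictAntiOn_quintic_Icc : StrictAntiOn quintic (Icc (-1.6) 1.2) :=
  strictAntiOn_of_hasDerivWithinAt_neg (convex_Icc _ _) continuous_quintic.continuousOn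
    (fun x _ ↦ (hasDerivAt_quintic x).hasDerivWithinAt)
    (fun _ hx ↦ quintic'_neg_of_mem_Icc (interior_subset hx))

lemma strictMonoOn_quintic_Ici : StrictMonoOn quintic (Ici 1.3) :=
  strictMonoOn_of_hasDerivWithinAt_pos (convex_Ici _) continuous_quintic.continuousOn
    (fun x _ ↦ (hasDerivAt_quintic x).hasDerivWithinAt)
    (fun _ hx ↦ quintic'_pos_of_ge (interior_subset (s := Ici _) hx))

lemma quintic_zeros_subset : quintic ⁻¹' {0} ⊆ Iic (-1.7) ∪ Icc (-1.6) 1.2 ∪ Ici 1.3 := by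
  intro x hx
  by_contra hcover
  simp only [mem_union, mem_Iic, mem_Icc, mem_Ici, not_or, not_and_or, not_le] at hcover
  obtain ⟨⟨h1, h2⟩, h3⟩ := hcover
  rcases h2 with h2 | h2
  · exact (quintic_pos_of_mem_Icc ⟨h1.le, h2.le⟩).ne' hx
  · exact (quintic_neg_of_mem_Icc ⟨h2.le, h3.le⟩).ne hx

lemma ncard_preimage_eq_three {α β : Type*} {f : α → β} {y : β} {A B C : Set α}
    (hcover : f ⁻¹' {y} ⊆ A ∪ B ∪ C) (hA : InjOn f A) (hB : InjOn f B) (hC : InjOn f C)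
    {a b c : α} (ha : a ∈ A) (hb : b ∈ B) (hc : c ∈ C) (hfa : f a = y) (hfb : f b = y)
    (hfc : f c = y) (hab : a ≠ b) (hac : a ≠ c) (hbc : b ≠ c) :
    (f ⁻¹' {y}).ncard = 3 := by
  refine ncard_eq_three.2 ⟨a, b, c, hab, hac, hbc, Subset.antisymm (fun _ hx ↦ ?_) ?_⟩
  · rcases hcover hx with (hxA | hxB) | hxC
    · exact .inl (hA hxA ha (hx.trans hfa.symm))
    · exact .inr (.inl (hB hxB hb (hx.trans hfb.symm)))
    · exact .inr (.inr (hC hxC hc (hx.trans hfc.symm)))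
  · rintro x (rfl | rfl | rfl) <;> assumption

/-- The quintic t^5 + t^4 − 3t^3 − 2t^2 − t − 1 has exactly three real roots. -/
theorem stmt16 :
    ({x : ℝ | x ^ 5 + x ^ 4 - 3 * x ^ 3 - 2 * x ^ 2 - x - 1 = 0}).ncard = 3 := by
  obtain ⟨a, ⟨-, ha⟩, hfa⟩ : ∃ a ∈ Icc (-3 : ℝ) (-1.7), quintic a = 0 :=
    intermediate_value_Icc (by norm_num) continuous_quintic.continuousOn
      ⟨by norm_num [quintic], (quintic_pos_of_mem_Icc (by norm_num)).le⟩
  obtain ⟨b, hb, hfb⟩ : ∃ b ∈ Icc (-1.6 : ℝ) 1.2, quintic b = 0 :=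
    intermediate_value_Icc' (by norm_num) continuous_quintic.continuousOn
      ⟨(quintic_neg_of_mem_Icc (by norm_num)).le, (quintic_pos_of_mem_Icc (by norm_num)).le⟩
  obtain ⟨c, ⟨hc, -⟩, hfc⟩ : ∃ c ∈ Icc (1.3 : ℝ) 2, quintic c = 0 :=
    intermediate_value_Icc (by norm_num) continuous_quintic.continuousOn
      ⟨(quintic_neg_of_mem_Icc (by norm_num)).le, by norm_num [quintic]⟩
  exact ncard_preimage_eq_three quintic_zeros_subset strictMonoOn_quintic_Iic.injOn
    strictAntiOn_quintic_Icc.injOn strictMonoOn_quintic_Ici.injOn (mem_Iic.2 ha) hb (mem_Ici.2 hc)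
    hfa hfb hfc (by linarith [hb.1]) (by linarith) (by linarith [hb.2])
end
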